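/- Let r be a nonnegative integer, and let G be a τ-critical graph with τ(G) = t ≥ r and |V(G)| = n. Let λ₁ denote the largest eigenvalue of the adjacency matrix of G. Then n·(r + λ₁/2) ≤ (t+r+1 choose 2). -/

import Mathlib

open SimpleGraph

variable {V : Type*}

/-- A transversal set (vertex cover): a set of vertices incident to all edges. -/
def IsTransversal (G : SimpleGraph V) (T : Finset V) : Prop :=
  ∀ ⦃u v : V⦄, G.Adj u v → u ∈ T ∨ v ∈ T

/-- The transversal number `τ(G)`: minimum cardinality of a transversal set. -/
noncomputable def tauNum (G : SimpleGraph V) [Fintype V] : ℕ :=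
  sInf {k | ∃ T : Finset V, T.card = k ∧ IsTransversal G T}

/-- `G` is τ-critical: it has no isolated vertex and deleting any edge decreases `τ`. -/
def IsTauCritical (G : SimpleGraph V) [Fintype V] : Prop :=
  (∀ v : V, ∃ u, G.Adj v u) ∧
    ∀ e ∈ G.edgeSet, tauNum (G.deleteEdges {e}) < tauNum G

/-- `mK2 m` is the disjoint union of `m` copies of `K₂`. -/
def mK2 (m : ℕ) : SimpleGraph (Fin m × Fin 2) where
  Adj x y := x.1 = y.1 ∧ x.2 ≠ y.2
  symm := ⟨fun _ _ ⟨h1, h2⟩ => ⟨h1.symm, h2.symm⟩⟩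
  loopless := ⟨fun _ ⟨_, h⟩ => h rfl⟩

/-- The spectral radius `λ₁(G)`: the largest eigenvalue of the adjacency matrix of `G`. -/
noncomputable def specRad (G : SimpleGraph V) [Fintype V] [DecidableEq V]
    [DecidableRel G.Adj] : ℝ :=
  sSup (spectrum ℝ (G.adjMatrix ℝ))

/-- The signless Laplacian spectral radius `q₁(G)`: the largest eigenvalue of
`Q(G) = D(G) + A(G)`. -/
noncomputable def signlessLapSpecRad (G : SimpleGraph V) [Fintype V] [DecidableEq V]
    [DecidableRel G.Adj] : ℝ :=
  sSup (spectrum ℝ (Matrix.diagonal (fun v => (G.degree v : ℝ)) + G.adjMatrix ℝ))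

/-!
By Hajnal's theorem every vertex of a τ-critical graph satisfies `n + deg v ≤ 2τ + 1`, so by
Gershgorin `λ₁ ≤ Δ ≤ 2τ + 1 - n`, and the claim reduces to `(n - t - r)(n - t - r - 1) ≥ 0`.

Hajnal's theorem rests on witnesses of criticality: for every edge `ab` the complement `D` of a
minimum transversal of `G - ab` has more than `n - τ` vertices and spans no edge but `ab`.
Exchanging an independent set `J` against such a witness proves the Hall-type inequality
`|J| ≤ |N(J) \ N(v)|` for independent `J` missing the closed neighbourhood of `v`, by induction
on `J`; applied to `J = D \ {u, v}` for a witness `D` of an edge `vu`, it gives the bound.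
-/

theorem tauNum_le_card [Fintype V] {G : SimpleGraph V} {T : Finset V} (hT : IsTransversal G T) :
    tauNum G ≤ T.card :=
  Nat.sInf_le ⟨T, rfl, hT⟩

theorem exists_isTransversal_card_eq_tauNum [Fintype V] (G : SimpleGraph V) :
    ∃ T : Finset V, T.card = tauNum G ∧ IsTransversal G T :=
  Nat.sInf_mem (s := {k | ∃ T : Finset V, T.card = k ∧ IsTransversal G T})
    ⟨_, Finset.univ, rfl, fun u _ _ => Or.inl (Finset.mem_univ u)⟩

theorem IsTransversal.of_deleteEdges {G : SimpleGraph V} {T : Finset V} {a b : V}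
    (hT : IsTransversal (G.deleteEdges {s(a, b)}) T) (ha : a ∈ T) : IsTransversal G T := by
  intro u v huv
  by_cases h : s(u, v) = s(a, b)
  · rcases Sym2.eq_iff.1 h with ⟨rfl, -⟩ | ⟨-, rfl⟩
    exacts [Or.inl ha, Or.inr ha]
  · exact hT (G.deleteEdges_adj.2 ⟨huv, by simpa using h⟩)

theorem SimpleGraph.IsIndepSet.sym2_eq_of_deleteEdges {G : SimpleGraph V} {D : Set V}
    {e : Sym2 V} (hD : (G.deleteEdges {e}).IsIndepSet D) {x y : V} (hx : x ∈ D) (hy : y ∈ D)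
    (hxy : G.Adj x y) : s(x, y) = e := by
  by_contra h
  exact hD hx hy hxy.ne (G.deleteEdges_adj.2 ⟨hxy, by simpa using h⟩)

section Transversal

variable [Fintype V] [DecidableEq V] {G : SimpleGraph V}

theorem isTransversal_compl_iff {D : Finset V} :
    IsTransversal G Dᶜ ↔ G.IsIndepSet (D : Set V) := by
  simp only [IsTransversal, Finset.mem_compl, SimpleGraph.IsIndepSet, Set.Pairwise,
    Finset.mem_coe]
  constructor
  · intro h x hx y hy _ hxy
    rcases h hxy with h | h <;> contradiction
  · intro h u v huv
    by_contra! hc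
    exact h hc.1 hc.2 huv.ne huv

theorem SimpleGraph.IsIndepSet.card_add_tauNum_le {I : Finset V} (hI : G.IsIndepSet (I : Set V)) :
    I.card + tauNum G ≤ Fintype.card V := by
  have h := tauNum_le_card (isTransversal_compl_iff.2 hI)
  rw [Finset.card_compl] at h
  have := I.card_le_univ
  omega

theorem IsTauCritical.exists_isIndepSet_deleteEdges (hG : IsTauCritical G) {a b : V}
    (hab : G.Adj a b) :
    ∃ D : Finset V, a ∈ D ∧ b ∈ D ∧ (G.deleteEdges {s(a, b)}).IsIndepSet (D : Set V) ∧
      Fintype.card V < D.card + tauNum G := by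
  obtain ⟨T, hTcard, hT⟩ := exists_isTransversal_card_eq_tauNum (G.deleteEdges {s(a, b)})
  have hlt : T.card < tauNum G := hTcard ▸ hG.2 _ hab
  have haT : a ∉ T := fun ha => (tauNum_le_card (hT.of_deleteEdges ha)).not_gt hlt
  have hbT : b ∉ T := fun hb =>
    (tauNum_le_card ((Sym2.eq_swap ▸ hT : IsTransversal _ T).of_deleteEdges hb)).not_gt hlt
  refine ⟨Tᶜ, Finset.mem_compl.2 haT, Finset.mem_compl.2 hbT,
    isTransversal_compl_iff.1 (by rwa [compl_compl]), ?_⟩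
  rw [Finset.card_compl]
  have := T.card_le_univ
  omega

end Transversal

/-- The neighbourhood `N(J)` of a set of vertices. -/
def SimpleGraph.setNeighborFinset [Fintype V] (G : SimpleGraph V) [DecidableRel G.Adj]
    (J : Finset V) : Finset V :=
  {z | ∃ x ∈ J, G.Adj x z}

theorem SimpleGraph.mem_setNeighborFinset [Fintype V] {G : SimpleGraph V} [DecidableRel G.Adj]
    {J : Finset V} {z : V} : z ∈ G.setNeighborFinset J ↔ ∃ x ∈ J, G.Adj x z := by
  simp [setNeighborFinset]

section Neighborhood

variable [Fintype V] [DecidableEq V] {G : SimpleGraph V} [DecidableRel G.Adj]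

/-- Exchange argument: `(D \ N(J)) ∪ (J \ D)` is independent in `G`, hence has at most
`|V| - τ(G) < |D|` elements. -/
theorem card_sdiff_lt_card_inter_setNeighborFinset {D J : Finset V} {x y : V}
    (hD : (G.deleteEdges {s(x, y)}).IsIndepSet (D : Set V))
    (hDcard : Fintype.card V < D.card + tauNum G) (hJ : G.IsIndepSet (J : Set V))
    (hy : y ∈ G.setNeighborFinset J) :
    (J \ D).card < (D ∩ G.setNeighborFinset J).card := by
  have hE : G.IsIndepSet ((D \ G.setNeighborFinset J ∪ J \ D : Finset V) : Set V) := by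
    intro u hu w hw _ huw
    simp only [Finset.coe_union, Set.mem_union, Finset.mem_coe, Finset.mem_sdiff] at hu hw
    rcases hu with ⟨huD, huN⟩ | ⟨huJ, -⟩ <;> rcases hw with ⟨hwD, hwN⟩ | ⟨hwJ, -⟩
    · rcases Sym2.eq_iff.1 (hD.sym2_eq_of_deleteEdges huD hwD huw) with ⟨-, rfl⟩ | ⟨rfl, -⟩
      exacts [hwN hy, huN hy]
    · exact huN (mem_setNeighborFinset.2 ⟨w, hwJ, huw.symm⟩)
    · exact hwN (mem_setNeighborFinset.2 ⟨u, huJ, huw⟩)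
    · exact hJ huJ hwJ huw.ne huw
  have hdisj : Disjoint (D \ G.setNeighborFinset J) (J \ D) :=
    Finset.disjoint_sdiff.mono_left Finset.sdiff_subset
  have hEcard := hE.card_add_tauNum_le
  rw [Finset.card_union_of_disjoint hdisj] at hEcard
  have := Finset.card_sdiff_add_card_inter D (G.setNeighborFinset J)
  omega

/-- The inductive step of Hajnal's lemma `|J| ≤ |N(J)|` for independent sets `J`: for a witness
`D` of an edge `ab` leaving `a ∈ J`, the exchange gives `|J \ D| < |N(J) ∩ D|`, and induction on
`(J ∩ D) \ {a}`, whose neighbours all lie outside `D`, gives `|J ∩ D| - 1 ≤ |N(J) \ D|`. -/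
theorem IsTauCritical.card_le_card_setNeighborFinset_of_ssubset (hG : IsTauCritical G)
    {J : Finset V} (hJ : G.IsIndepSet (J : Set V))
    (ih : ∀ J' ⊂ J, J'.card ≤ (G.setNeighborFinset J').card) :
    J.card ≤ (G.setNeighborFinset J).card := by
  rcases J.eq_empty_or_nonempty with rfl | ⟨a, ha⟩
  · simp
  obtain ⟨b, hab⟩ := hG.1 a
  obtain ⟨D, haD, -, hD, hDcard⟩ := hG.exists_isIndepSet_deleteEdges hab
  have hbN : b ∈ G.setNeighborFinset J := mem_setNeighborFinset.2 ⟨a, ha, hab⟩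
  have hexch := card_sdiff_lt_card_inter_setNeighborFinset hD hDcard hJ hbN
  have hsub : G.setNeighborFinset ((J ∩ D).erase a) ⊆ G.setNeighborFinset J \ D := by
    intro w hw
    obtain ⟨x, hx, hxw⟩ := mem_setNeighborFinset.1 hw
    obtain ⟨hxa, hxJ, hxD⟩ : x ≠ a ∧ x ∈ J ∧ x ∈ D := by simpa using hx
    refine Finset.mem_sdiff.2 ⟨mem_setNeighborFinset.2 ⟨x, hxJ, hxw⟩, fun hwD => ?_⟩
    rcases Sym2.eq_iff.1 (hD.sym2_eq_of_deleteEdges hxD hwD hxw) with ⟨rfl, -⟩ | ⟨rfl, -⟩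
    · exact hxa rfl
    · exact hJ ha hxJ hab.ne hab
  have haJD : a ∈ J ∩ D := Finset.mem_inter.2 ⟨ha, haD⟩
  have hrec := (ih _ ((Finset.erase_ssubset haJD).trans_subset Finset.inter_subset_left)).trans
    (Finset.card_le_card hsub)
  have := Finset.card_erase_of_mem haJD
  have := Finset.card_inter_add_card_sdiff J D
  have := Finset.card_sdiff_add_card_inter (G.setNeighborFinset J) D
  rw [Finset.inter_comm] at this
  have := (J ∩ D).card_pos.2 ⟨a, haJD⟩
  omega

/-- With `Z = N(J) \ N(v)` and `D` a witness of the edge `vb`, the exchange gives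
`|J \ D| ≤ |Z ∩ D|` (the only neighbour of `v` in `D` is `b`), and induction on `J ∩ D`, whose
`Z`-neighbours all lie outside `D`, gives `|J ∩ D| ≤ |Z \ D|`. -/
theorem IsTauCritical.card_le_card_setNeighborFinset_sdiff_of_adj (hG : IsTauCritical G)
    {J : Finset V} {v b : V} (hJ : G.IsIndepSet (J : Set V)) (hvJ : v ∉ J)
    (hJv : ∀ x ∈ J, ¬G.Adj v x) (hb : b ∈ G.setNeighborFinset J) (hvb : G.Adj v b)
    (ih : ∀ J' ⊂ J, J'.card ≤ (G.setNeighborFinset J' \ G.neighborFinset v).card) :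
    J.card ≤ (G.setNeighborFinset J \ G.neighborFinset v).card := by
  obtain ⟨a, ha, hab⟩ := mem_setNeighborFinset.1 hb
  obtain ⟨D, hvD, hbD, hD, hDcard⟩ := hG.exists_isIndepSet_deleteEdges hvb
  have hexch := card_sdiff_lt_card_inter_setNeighborFinset hD hDcard hJ hb
  have hDN : D ∩ G.setNeighborFinset J ⊆
      insert b (D ∩ (G.setNeighborFinset J \ G.neighborFinset v)) := by
    intro w hw
    obtain ⟨hwD, hwN⟩ := Finset.mem_inter.1 hw
    by_cases hvw : G.Adj v w
    · rcases Sym2.eq_iff.1 (hD.sym2_eq_of_deleteEdges hvD hwD hvw) with ⟨-, rfl⟩ | ⟨rfl, -⟩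
      exacts [Finset.mem_insert_self _ _, (hvb.ne rfl).elim]
    · simp [hwD, hwN, hvw]
  have haD : a ∉ D := fun haD => by
    rcases Sym2.eq_iff.1 (hD.sym2_eq_of_deleteEdges haD hbD hab) with ⟨rfl, -⟩ | ⟨rfl, -⟩
    exacts [hvJ ha, hab.ne rfl]
  have hsub : G.setNeighborFinset (J ∩ D) \ G.neighborFinset v ⊆
      (G.setNeighborFinset J \ G.neighborFinset v) \ D := by
    intro w hw
    obtain ⟨hwN, hvw⟩ := Finset.mem_sdiff.1 hw
    obtain ⟨x, hx, hxw⟩ := mem_setNeighborFinset.1 hwN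
    obtain ⟨hxJ, hxD⟩ := Finset.mem_inter.1 hx
    refine Finset.mem_sdiff.2 ⟨Finset.mem_sdiff.2
      ⟨mem_setNeighborFinset.2 ⟨x, hxJ, hxw⟩, hvw⟩, fun hwD => ?_⟩
    rcases Sym2.eq_iff.1 (hD.sym2_eq_of_deleteEdges hxD hwD hxw) with ⟨rfl, -⟩ | ⟨rfl, -⟩
    · exact hvJ hxJ
    · exact hJv x hxJ hvb
  have hrec := (ih _ (Finset.ssubset_iff_of_subset Finset.inter_subset_left |>.2
    ⟨a, ha, fun h => haD (Finset.mem_inter.1 h).2⟩)).trans (Finset.card_le_card hsub)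
  have := (Finset.card_le_card hDN).trans (Finset.card_insert_le _ _)
  have := Finset.card_inter_add_card_sdiff J D
  have := Finset.card_sdiff_add_card_inter (G.setNeighborFinset J \ G.neighborFinset v) D
  rw [Finset.inter_comm (_ \ _) D] at this
  omega

theorem IsTauCritical.card_le_card_setNeighborFinset_sdiff (hG : IsTauCritical G) (v : V)
    {J : Finset V} (hJ : G.IsIndepSet (J : Set V)) (hvJ : v ∉ J) (hJv : ∀ x ∈ J, ¬G.Adj v x) :
    J.card ≤ (G.setNeighborFinset J \ G.neighborFinset v).card := by
  induction J using Finset.strongInduction with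
  | H J ih =>
  have ih' : ∀ J' ⊂ J, J'.card ≤ (G.setNeighborFinset J' \ G.neighborFinset v).card :=
    fun J' hJ' => ih J' hJ' (hJ.mono (Finset.coe_subset.2 hJ'.subset))
      (fun h => hvJ (hJ'.subset h)) (fun x hx => hJv x (hJ'.subset hx))
  by_cases hA : ∃ b ∈ G.setNeighborFinset J, G.Adj v b
  · obtain ⟨b, hb, hvb⟩ := hA
    exact hG.card_le_card_setNeighborFinset_sdiff_of_adj hJ hvJ hJv hb hvb ih'
  · push Not at hA
    have hfar : ∀ J' ⊆ J, G.setNeighborFinset J' \ G.neighborFinset v = G.setNeighborFinset J' :=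
      fun J' hJ' => Finset.sdiff_eq_self_of_disjoint <| Finset.disjoint_left.2 fun w hw hvw =>
        hA w (mem_setNeighborFinset.2 ((mem_setNeighborFinset.1 hw).imp fun x ⟨hx, hxw⟩ =>
          ⟨hJ' hx, hxw⟩)) ((mem_neighborFinset _ _ _).1 hvw)
    rw [hfar J subset_rfl]
    exact hG.card_le_card_setNeighborFinset_of_ssubset hJ
      fun J' hJ' => hfar J' hJ'.subset ▸ ih' J' hJ'

theorem card_add_card_setNeighborFinset_sdiff_add_degree_lt {J : Finset V} {v : V}
    (hJ : G.IsIndepSet (J : Set V)) (hvJ : v ∉ J) (hJv : ∀ x ∈ J, ¬G.Adj v x) :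
    J.card + (G.setNeighborFinset J \ G.neighborFinset v).card + G.degree v <
      Fintype.card V := by
  have hJZ : Disjoint J (G.setNeighborFinset J \ G.neighborFinset v) := by
    refine Finset.disjoint_left.2 fun x hxJ hxZ => ?_
    obtain ⟨y, hyJ, hyx⟩ := mem_setNeighborFinset.1 (Finset.mem_sdiff.1 hxZ).1
    exact hJ hyJ hxJ hyx.ne hyx
  have hJZv : Disjoint (J ∪ (G.setNeighborFinset J \ G.neighborFinset v))
      (insert v (G.neighborFinset v)) := by
    refine Finset.disjoint_left.2 fun x hx hxv => ?_
    simp only [Finset.mem_union, Finset.mem_sdiff, Finset.mem_insert, mem_neighborFinset,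
      mem_setNeighborFinset] at hx hxv
    rcases hxv with rfl | hvx
    · rcases hx with hxJ | ⟨⟨y, hyJ, hyx⟩, -⟩
      exacts [hvJ hxJ, hJv y hyJ hyx.symm]
    · rcases hx with hxJ | ⟨-, hvx'⟩
      exacts [hJv x hxJ hvx, hvx' hvx]
  have hcard := (J ∪ (G.setNeighborFinset J \ G.neighborFinset v) ∪
    insert v (G.neighborFinset v)).card_le_univ
  rw [Finset.card_union_of_disjoint hJZv, Finset.card_union_of_disjoint hJZ,
    Finset.card_insert_of_notMem (G.notMem_neighborFinset_self v),
    card_neighborFinset_eq_degree] at hcard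
  omega

/-- Hajnal's degree bound. Taking a witness `D` of criticality of an edge `vu`,
`J = D \ {u, v}` is an independent set of size at least `|V| - τ(G) - 1` missing the closed
neighbourhood of `v`. -/
theorem IsTauCritical.card_add_degree_le (hG : IsTauCritical G) (v : V) :
    Fintype.card V + G.degree v ≤ 2 * tauNum G + 1 := by
  obtain ⟨u, hvu⟩ := hG.1 v
  obtain ⟨D, hvD, huD, hD, hDcard⟩ := hG.exists_isIndepSet_deleteEdges hvu
  have hmem : ∀ {x}, x ∈ (D.erase v).erase u ↔ x ≠ u ∧ x ≠ v ∧ x ∈ D := by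
    simp only [Finset.mem_erase, implies_true]
  have hJ : G.IsIndepSet (((D.erase v).erase u : Finset V) : Set V) := by
    intro x hx y hy _ hxy
    obtain ⟨hxu, hxv, hxD⟩ := hmem.1 hx
    rcases Sym2.eq_iff.1 (hD.sym2_eq_of_deleteEdges hxD (hmem.1 hy).2.2 hxy) with
      ⟨rfl, -⟩ | ⟨rfl, -⟩
    exacts [hxv rfl, hxu rfl]
  have hvJ : v ∉ (D.erase v).erase u := fun h => (hmem.1 h).2.1 rfl
  have hJv : ∀ x ∈ (D.erase v).erase u, ¬G.Adj v x := fun x hx hvx => by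
    obtain ⟨hxu, -, hxD⟩ := hmem.1 hx
    rcases Sym2.eq_iff.1 (hD.sym2_eq_of_deleteEdges hvD hxD hvx) with ⟨-, rfl⟩ | ⟨rfl, -⟩
    exacts [hxu rfl, hvu.ne rfl]
  have hJcard : ((D.erase v).erase u).card + 2 = D.card := by
    rw [Finset.card_erase_of_mem (Finset.mem_erase.2 ⟨hvu.ne.symm, huD⟩),
      Finset.card_erase_of_mem hvD]
    have := Finset.one_lt_card.2 ⟨v, hvD, u, huD, hvu.ne⟩
    omega
  have hHall := hG.card_le_card_setNeighborFinset_sdiff v hJ hvJ hJv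
  have hcount := card_add_card_setNeighborFinset_sdiff_add_degree_lt hJ hvJ hJv
  omega

theorem IsTauCritical.card_add_maxDegree_le (hG : IsTauCritical G) :
    Fintype.card V + G.maxDegree ≤ 2 * tauNum G + 1 := by
  cases isEmpty_or_nonempty V
  · simp
  · obtain ⟨v, hv⟩ := G.exists_maximal_degree_vertex
    exact hv ▸ hG.card_add_degree_le v

end Neighborhood

theorem specRad_le_maxDegree [Fintype V] [DecidableEq V] (G : SimpleGraph V)
    [DecidableRel G.Adj] : specRad G ≤ G.maxDegree := by
  refine Real.sSup_le (fun μ hμ => ?_) (Nat.cast_nonneg _)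
  rw [← Matrix.spectrum_toLin', ← Module.End.hasEigenvalue_iff_mem_spectrum] at hμ
  obtain ⟨k, hk⟩ := eigenvalue_mem_ball hμ
  have hrow : ∑ j ∈ Finset.univ.erase k, ‖G.adjMatrix ℝ k j‖ = G.degree k := by
    simp only [adjMatrix_apply, apply_ite, norm_one, norm_zero, Finset.sum_boole,
      Finset.filter_erase, ← neighborFinset_eq_filter, card_neighborFinset_eq_degree,
      Finset.erase_eq_of_notMem (G.notMem_neighborFinset_self k)]
  rw [Metric.mem_closedBall, hrow, adjMatrix_apply, if_neg (G.loopless.irrefl k), Real.dist_eq,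
    sub_zero] at hk
  exact (le_abs_self μ).trans (hk.trans (by exact_mod_cast G.degree_le_maxDegree k))

theorem tau_critical_card_mul_r_add_half_specRad_le_general (G : SimpleGraph V) [Fintype V]
    [DecidableEq V] [DecidableRel G.Adj] (t n r : ℕ) (hcrit : IsTauCritical G)
    (ht : tauNum G = t) (hn : Fintype.card V = n) :
    (n : ℝ) * (r + specRad G / 2) ≤ ((t + r + 1).choose 2 : ℝ) := by
  have hdeg : (n : ℝ) + G.maxDegree ≤ 2 * t + 1 := by
    rw [← hn, ← ht]
    exact_mod_cast hcrit.card_add_maxDegree_le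
  -- `k ≤ k ^ 2` for the integer `k = n - t - r` is the final inequality after clearing `λ₁`
  have hsq : (n : ℝ) - t - r ≤ ((n : ℝ) - t - r) ^ 2 := by
    exact_mod_cast Int.le_self_sq (n - t - r)
  calc (n : ℝ) * (r + specRad G / 2) ≤ n * (r + (2 * t + 1 - n) / 2) := by
        gcongr
        linarith [specRad_le_maxDegree G]
    _ ≤ ((t + r + 1).choose 2 : ℝ) := by
        rw [Nat.cast_choose_two]
        push_cast
        nlinarith

/-- For a nonnegative integer `r` and a τ-critical graph `G` with
`τ(G) = t ≥ r` and `|V(G)| = n`, we have `n·(r + λ₁/2) ≤ (t+r+1 choose 2)`. -/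
theorem tau_critical_card_mul_r_add_half_specRad_le (G : SimpleGraph V) [Fintype V]
    [DecidableEq V] [DecidableRel G.Adj] (t n r : ℕ) (hcrit : IsTauCritical G)
    (ht : tauNum G = t) (hn : Fintype.card V = n) (hr : r ≤ t) :
    (n : ℝ) * (r + specRad G / 2) ≤ ((t + r + 1).choose 2 : ℝ) :=
  tau_critical_card_mul_r_add_half_specRad_le_general G t n r hcrit ht hn
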